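/- One-sided product estimate: for fibrewise maps f_1,...,f_r : X → Y and g : X̃ → Ỹ over B, D_B(f_1 ×_B g,...,f_r ×_B g) ≤ D_B(f_1,...,f_r). -/

import Mathlib

open Set

/-- Two continuous maps are fibrewise homotopic over `B`: there is a homotopy
whose every time-slice commutes with the projections to `B`. -/
def FibHomotopic {B X Y : Type*} [TopologicalSpace B] [TopologicalSpace X] [TopologicalSpace Y]
    (pX : X → B) (pY : Y → B) (f g : C(X, Y)) : Prop :=
  ∃ H : f.Homotopy g, ∀ (x : X) (t : unitInterval), pY (H (t, x)) = pX x

/-- Sequential parametrized homotopic distance of a family of fibrewise maps: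
the least `n` such that `X` admits an open cover by `n + 1` open sets on each of
which all the maps are pairwise fibrewise homotopic (`∞` if none exists). -/
noncomputable def fibDist {B X Y ι : Type*} [TopologicalSpace B] [TopologicalSpace X]
    [TopologicalSpace Y] (pX : X → B) (pY : Y → B) (f : ι → C(X, Y)) : ℕ∞ :=
  sInf {n : ℕ∞ | ∃ k : ℕ, (k : ℕ∞) = n ∧ ∃ U : Fin (k + 1) → Set X,
    (∀ i, IsOpen (U i)) ∧ (⋃ i, U i) = Set.univ ∧
    ∀ i s t, FibHomotopic (fun x : U i => pX (x : X)) pY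
      ((f s).restrict (U i)) ((f t).restrict (U i))}

/-- The fibred product of two fibrewise spaces over `B`. -/
abbrev FibProd {B X X' : Type*} [TopologicalSpace B] [TopologicalSpace X] [TopologicalSpace X']
    (pX : X → B) (pX' : X' → B) : Type _ := {z : X × X' // pX z.1 = pX' z.2}

/-- The fibrewise product `f ×_B g` of two fibrewise maps. -/
def fibProdMap {B X X' Y Y' : Type*} [TopologicalSpace B] [TopologicalSpace X]
    [TopologicalSpace X'] [TopologicalSpace Y] [TopologicalSpace Y']
    {pX : X → B} {pX' : X' → B} {pY : Y → B} {pY' : Y' → B}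
    (f : C(X, Y)) (g : C(X', Y')) (hf : ∀ x, pY (f x) = pX x) (hg : ∀ x, pY' (g x) = pX' x) :
    C(FibProd pX pX', FibProd pY pY') :=
  ⟨fun z => ⟨(f z.1.1, g z.1.2), by rw [hf, hg, z.2]⟩, by
    apply Continuous.subtype_mk
    exact ((f.continuous.comp continuous_fst).prodMk
      (g.continuous.comp continuous_snd)).comp continuous_subtype_val⟩

/-!
Pull an open cover of `X` witnessing `D_B(f_1, …, f_r)` back along the projection
`X ×_B X̃ → X`. On the preimage of `U`, which is `U ×_B X̃`, a fibrewise homotopy `H` from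
`f_s|U` to `f_t|U` induces the fibrewise homotopy `(H, g)` from `f_s ×_B g` to `f_t ×_B g`.
-/

section FibHomotopic

variable {B X X' Y Y' Z : Type*} [TopologicalSpace B] [TopologicalSpace X] [TopologicalSpace X']
  [TopologicalSpace Y] [TopologicalSpace Y'] [TopologicalSpace Z]
  {pX : X → B} {pX' : X' → B} {pY : Y → B} {pY' : Y' → B} {f₀ f₁ : C(X, Y)}

theorem FibHomotopic.compContinuousMap (h : FibHomotopic pX pY f₀ f₁) (φ : C(Z, X)) :
    FibHomotopic (pX ∘ φ) pY (f₀.comp φ) (f₁.comp φ) := by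
  obtain ⟨H, hH⟩ := h
  exact ⟨H.comp (.refl φ), fun z t => hH (φ z) t⟩

theorem FibHomotopic.fibProdMap (h : FibHomotopic pX pY f₀ f₁) (g : C(X', Y'))
    (hf₀ : ∀ x, pY (f₀ x) = pX x) (hf₁ : ∀ x, pY (f₁ x) = pX x) (hg : ∀ x, pY' (g x) = pX' x) :
    FibHomotopic (fun z : FibProd pX pX' => pX z.1.1) (fun w : FibProd pY pY' => pY w.1.1)
      (fibProdMap f₀ g hf₀ hg) (fibProdMap f₁ g hf₁ hg) := by
  obtain ⟨H, hH⟩ := h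
  refine ⟨{ toFun := fun p => ⟨(H (p.1, p.2.1.1), g p.2.1.2), by rw [hH, hg, p.2.2]⟩
            continuous_toFun := by fun_prop
            map_zero_left := fun z => Subtype.ext (Prod.ext (H.apply_zero z.1.1) rfl)
            map_one_left := fun z => Subtype.ext (Prod.ext (H.apply_one z.1.1) rfl) },
    fun z t => hH z.1.1 t⟩

end FibHomotopic

theorem fibDist_le_of_forall_preimage {B X Y Z W ι : Type*} [TopologicalSpace B]
    [TopologicalSpace X] [TopologicalSpace Y] [TopologicalSpace Z] [TopologicalSpace W]
    {pX : X → B} {pY : Y → B} {pZ : Z → B} {pW : W → B} {f : ι → C(X, Y)} {f' : ι → C(Z, W)}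
    {φ : Z → X} (hφ : Continuous φ)
    (h : ∀ (U : Set X) s t,
      FibHomotopic (fun x : U => pX x) pY ((f s).restrict U) ((f t).restrict U) →
      FibHomotopic (fun z : φ ⁻¹' U => pZ z) pW ((f' s).restrict (φ ⁻¹' U))
        ((f' t).restrict (φ ⁻¹' U))) :
    fibDist pZ pW f' ≤ fibDist pX pY f := by
  refine sInf_le_sInf ?_
  rintro n ⟨k, rfl, U, hUopen, hUcov, hU⟩
  refine ⟨k, rfl, fun i => φ ⁻¹' U i, fun i => (hUopen i).preimage hφ, ?_,
    fun i s t => h _ s t (hU i s t)⟩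
  rw [← preimage_iUnion, hUcov, preimage_univ]

theorem stmt14 {B X X' Y Y' : Type*} [TopologicalSpace B] [TopologicalSpace X]
    [TopologicalSpace X'] [TopologicalSpace Y] [TopologicalSpace Y']
    (pX : X → B) (pX' : X' → B) (pY : Y → B) (pY' : Y' → B)
    (r : ℕ) (f : Fin r → C(X, Y)) (hf : ∀ i x, pY (f i x) = pX x)
    (g : C(X', Y')) (hg : ∀ x, pY' (g x) = pX' x) :
    fibDist (fun z : FibProd pX pX' => pX z.1.1) (fun w : FibProd pY pY' => pY w.1.1)
      (fun i => fibProdMap (f i) g (hf i) hg) ≤ fibDist pX pY f := by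
  refine fibDist_le_of_forall_preimage (φ := fun z : FibProd pX pX' => z.1.1) (by fun_prop) ?_
  intro U s t hst
  -- the preimage of `U` in `X ×_B X'` is `U ×_B X'`
  let ψ : C((fun z : FibProd pX pX' => z.1.1) ⁻¹' U, FibProd (fun x : U => pX x) pX') :=
    ⟨fun w => ⟨(⟨w.1.1.1, w.2⟩, w.1.1.2), w.1.2⟩, by fun_prop⟩
  exact (hst.fibProdMap g (fun x => hf s x) (fun x => hf t x) hg).compContinuousMap ψ
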